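/- The ratio of the number of nonsquarefree multiples of 6 to the number of squarefree multiples of 6 tends to π²/3 − 1: the quantity (#{m : 1 ≤ m ≤ N and 6m is not squarefree})/(#{m : 1 ≤ m ≤ N and 6m is squarefree}) tends to π²/3 − 1 as N → ∞. -/

import Mathlib

/-!
Since `[n squarefree] = ∑_{d² ∣ n} μ(d)` and `d² ∣ k m ↔ d² / gcd(d², k) ∣ m`, the number of
`m ≤ N` with `k m` squarefree is `∑_d μ(d) ⌊N / (d² / gcd(d², k))⌋`. Dividing by `N` and letting
`N → ∞` (dominated convergence, the terms being `O(k / d²)`) gives the density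
`∑_d μ(d) gcd(d², k) / d²`. This series is multiplicative, and its Euler factors
`1 - gcd(p², k) / p²` agree with those of `∑_d μ(d) / d² = 1 / ζ(2) = 6 / π²` except at the primes
dividing `k`. For `k = 6` the correction is `(2/3) (3/4) = 1/2`, so `6 m` is squarefree with
density `δ = 3 / π²`, and the ratio of the two counts tends to `δ⁻¹ - 1 = π² / 3 - 1`.
-/

open Filter Finset ArithmeticFunction Real
open scoped ArithmeticFunction.Moebius Topology

theorem sum_moebius_of_sq_dvd {n : ℕ} (hn : n ≠ 0) :
    ∑ d ∈ n.divisors with d ^ 2 ∣ n, μ d = if Squarefree n then 1 else 0 := by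
  obtain ⟨a, b, rfl, ha⟩ := Nat.sq_mul_squarefree n
  have hb : b ≠ 0 := by rintro rfl; simp at hn
  have hsub : b.divisors ⊆ {d ∈ (b ^ 2 * a).divisors | d ^ 2 ∣ b ^ 2 * a} := by
    intro d hd
    have hd2 : d ^ 2 ∣ b ^ 2 * a := (pow_dvd_pow_of_dvd (Nat.dvd_of_mem_divisors hd) 2).mul_right a
    exact mem_filter.2 ⟨Nat.mem_divisors.2 ⟨(dvd_pow_self d two_ne_zero).trans hd2, hn⟩, hd2⟩
  -- a squarefree `d` with `d² ∣ b² a` divides `b²`, hence `b`; the other `d` have `μ d = 0`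
  have hvanish :
      ∀ d ∈ {d ∈ (b ^ 2 * a).divisors | d ^ 2 ∣ b ^ 2 * a}, d ∉ b.divisors → μ d = 0 := by
    intro d hd hdb
    refine moebius_eq_zero_of_not_squarefree fun hsq => hdb (Nat.mem_divisors.2 ⟨?_, hb⟩)
    rw [← hsq.dvd_pow_iff_dvd two_ne_zero]
    exact Squarefree.dvd_of_squarefree_of_mul_dvd_mul_left ha (sq d ▸ (mem_filter.1 hd).2)
  have hb1 : b = 1 ↔ Squarefree (b ^ 2 * a) := by
    refine ⟨fun h => by simpa [h] using ha, fun h => ?_⟩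
    exact Nat.isUnit_iff.1 (h b ⟨a, by ring⟩)
  have hmoeb := congr($moebius_mul_coe_zeta b)
  rw [coe_mul_zeta_apply, one_apply] at hmoeb
  rw [← sum_subset hsub hvanish, hmoeb]
  exact if_congr hb1 rfl rfl

theorem dvd_mul_iff_div_gcd_dvd {a k m : ℕ} (hk : k ≠ 0) : a ∣ k * m ↔ a / a.gcd k ∣ m := by
  set g := a.gcd k
  have hg : 0 < g := Nat.gcd_pos_of_pos_right _ (Nat.pos_of_ne_zero hk)
  have ha : g * (a / g) = a := Nat.mul_div_cancel' (Nat.gcd_dvd_left a k)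
  have hkm : g * (k / g * m) = k * m := by
    rw [← mul_assoc, Nat.mul_div_cancel' (Nat.gcd_dvd_right a k)]
  calc a ∣ k * m ↔ g * (a / g) ∣ g * (k / g * m) := by rw [ha, hkm]
    _ ↔ a / g ∣ k / g * m := mul_dvd_mul_iff_left hg.ne'
    _ ↔ a / g ∣ m := (Nat.coprime_div_gcd_div_gcd hg).dvd_mul_left

theorem le_mul_div_gcd {k : ℕ} (hk : k ≠ 0) (a : ℕ) : a ≤ k * (a / a.gcd k) := by
  conv_lhs => rw [← Nat.mul_div_cancel' (Nat.gcd_dvd_left a k)]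
  exact Nat.mul_le_mul_right _ (Nat.gcd_le_right _ (Nat.pos_of_ne_zero hk))

theorem inv_natCast_div_gcd {k : ℕ} (hk : k ≠ 0) (a : ℕ) :
    ((a / a.gcd k : ℕ) : ℝ)⁻¹ = a.gcd k / a := by
  rw [Nat.cast_div (Nat.gcd_dvd_left a k) (Nat.cast_ne_zero.2 (Nat.gcd_ne_zero_right hk)), inv_div]

theorem card_filter_squarefree_mul_eq_sum {k : ℕ} (hk : k ≠ 0) (N : ℕ) :
    (#{m ∈ Icc 1 N | Squarefree (k * m)} : ℤ) =
      ∑ d ∈ Icc 1 (k * N), μ d * (N / (d ^ 2 / (d ^ 2).gcd k) : ℕ) := by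
  calc (#{m ∈ Icc 1 N | Squarefree (k * m)} : ℤ)
      = ∑ m ∈ Icc 1 N, ∑ d ∈ (k * m).divisors with d ^ 2 ∣ k * m, μ d := by
        rw [natCast_card_filter]
        refine sum_congr rfl fun m hm => ?_
        rw [sum_moebius_of_sq_dvd (mul_ne_zero hk (Nat.one_le_iff_ne_zero.1 (mem_Icc.1 hm).1))]
    _ = ∑ d ∈ Icc 1 (k * N), ∑ m ∈ Icc 1 N with d ^ 2 ∣ k * m, μ d := by
        refine sum_comm' fun m d => ?_
        simp only [mem_filter, mem_Icc, Nat.mem_divisors]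
        constructor
        · rintro ⟨⟨hm1, hmN⟩, ⟨hdvd, hkm⟩, hd2⟩
          have hkm' := Nat.pos_of_ne_zero hkm
          exact ⟨⟨⟨hm1, hmN⟩, hd2⟩, Nat.pos_of_dvd_of_pos hdvd hkm',
            (Nat.le_of_dvd hkm' hdvd).trans (Nat.mul_le_mul_left k hmN)⟩
        · rintro ⟨⟨⟨hm1, hmN⟩, hd2⟩, -, -⟩
          exact ⟨⟨hm1, hmN⟩, ⟨(dvd_pow_self d two_ne_zero).trans hd2, mul_ne_zero hk (by omega)⟩,
            hd2⟩
    _ = ∑ d ∈ Icc 1 (k * N), μ d * (N / (d ^ 2 / (d ^ 2).gcd k) : ℕ) := by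
        refine sum_congr rfl fun d _ => ?_
        rw [sum_const, filter_congr fun m _ => dvd_mul_iff_div_gcd_dvd hk,
          show Icc 1 N = Ioc 0 N from rfl, Nat.Ioc_filter_dvd_card_eq_div, nsmul_eq_mul, mul_comm]

theorem card_filter_squarefree_mul_div_eq_tsum {k : ℕ} (hk : k ≠ 0) (N : ℕ) :
    (#{m ∈ Icc 1 N | Squarefree (k * m)} : ℝ) / N =
      ∑' d, (μ d : ℝ) * (((N / (d ^ 2 / (d ^ 2).gcd k) : ℕ) : ℝ) / N) := by
  rw [tsum_eq_sum (s := Icc 1 (k * N)) fun d hd => ?_]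
  · have h := congr((($(card_filter_squarefree_mul_eq_sum hk N) : ℤ) : ℝ))
    simp only [Int.cast_natCast, Int.cast_sum, Int.cast_mul] at h
    simp only [h, sum_div, mul_div_assoc]
  · rcases Nat.eq_zero_or_pos d with rfl | hd0
    · simp
    have hN : N < d ^ 2 / (d ^ 2).gcd k := by
      have := le_mul_div_gcd hk (d ^ 2)
      simp only [mem_Icc, not_and_or, not_le] at hd
      rcases hd with hd | hd
      · omega
      · by_contra! h
        linarith [Nat.mul_le_mul_left k h, Nat.le_self_pow two_ne_zero d]
    simp [Nat.div_eq_of_lt hN]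

theorem tendsto_natCast_div_div (q : ℕ) :
    Tendsto (fun N : ℕ => ((N / q : ℕ) : ℝ) / N) atTop (𝓝 (q : ℝ)⁻¹) := by
  rcases Nat.eq_zero_or_pos q with rfl | hq
  · simp
  have hq' : (0 : ℝ) < q := Nat.cast_pos.2 hq
  have h := (tendsto_nat_floor_div_atTop.comp
    (tendsto_natCast_atTop_atTop.atTop_div_const hq')).mul_const (q : ℝ)⁻¹
  rw [one_mul] at h
  refine h.congr' ?_
  filter_upwards [eventually_ne_atTop 0] with N hN
  simp only [Function.comp_apply, Nat.floor_div_natCast, Nat.floor_natCast]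
  field_simp

theorem natCast_div_div_le_inv (N q : ℕ) : ((N / q : ℕ) : ℝ) / N ≤ (q : ℝ)⁻¹ :=
  calc ((N / q : ℕ) : ℝ) / N ≤ (N / q : ℝ) / N := by gcongr; exact Nat.cast_div_le
    _ ≤ (q : ℝ)⁻¹ := by
      rcases eq_or_ne (N : ℝ) 0 with hN | hN
      · simp [hN]
      · rw [div_div_cancel_left' hN]

noncomputable def moebiusGcdSq (k : ℕ) : ArithmeticFunction ℝ :=
  ⟨fun d => μ d * (((d ^ 2).gcd k : ℕ) / (d : ℝ) ^ 2), by simp⟩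

theorem moebiusGcdSq_apply (k d : ℕ) :
    moebiusGcdSq k d = μ d * (((d ^ 2).gcd k : ℕ) / (d : ℝ) ^ 2) := rfl

theorem summable_norm_moebiusGcdSq {k : ℕ} (hk : k ≠ 0) : Summable (‖moebiusGcdSq k ·‖) := by
  refine .of_nonneg_of_le (fun _ => norm_nonneg _) (fun d => ?_)
    ((Real.summable_nat_pow_inv.2 one_lt_two).mul_left (k : ℝ))
  have hμ : |(μ d : ℝ)| ≤ 1 := by exact_mod_cast abs_moebius_le_one
  have hgcd : ((d ^ 2).gcd k : ℝ) ≤ k := by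
    exact_mod_cast Nat.gcd_le_right _ (Nat.pos_of_ne_zero hk)
  rw [moebiusGcdSq_apply, norm_mul, norm_div, Real.norm_eq_abs, Real.norm_natCast,
    norm_pow, Real.norm_natCast, ← div_eq_mul_inv, ← one_mul ((k : ℝ) / _)]
  gcongr

theorem isMultiplicative_moebiusGcdSq (k : ℕ) : (moebiusGcdSq k).IsMultiplicative := by
  refine IsMultiplicative.iff_ne_zero.2 ⟨by simp [moebiusGcdSq_apply], fun {m n} hm hn hmn => ?_⟩
  have hμ : (μ (m * n) : ℝ) = μ m * μ n := by
    exact_mod_cast isMultiplicative_moebius.map_mul_of_coprime hmn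
  have hgcd : ((m * n) ^ 2).gcd k = (m ^ 2).gcd k * (n ^ 2).gcd k := by
    rw [mul_pow, Nat.gcd_comm, (hmn.pow 2 2).gcd_mul, Nat.gcd_comm, Nat.gcd_comm k]
  simp only [moebiusGcdSq_apply, hμ, hgcd]
  push_cast
  field_simp

theorem tsum_moebiusGcdSq_prime_pow (k : ℕ) {p : ℕ} (hp : p.Prime) :
    ∑' e, moebiusGcdSq k (p ^ e) = 1 - ((p ^ 2).gcd k : ℕ) / (p : ℝ) ^ 2 := by
  rw [tsum_eq_sum (s := range 2) fun e he => ?_]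
  · simp [sum_range_succ, moebiusGcdSq_apply, moebius_apply_prime hp, sub_eq_add_neg]
  · simp only [mem_range, not_lt] at he
    rw [moebiusGcdSq_apply, moebius_apply_prime_pow hp (by omega)]
    simp [show e ≠ 1 by omega]

theorem tendsto_card_filter_squarefree_mul_div {k : ℕ} (hk : k ≠ 0) :
    Tendsto (fun N : ℕ => (#{m ∈ Icc 1 N | Squarefree (k * m)} : ℝ) / N) atTop
      (𝓝 (∑' d, moebiusGcdSq k d)) := by
  have hterm : ∀ d, moebiusGcdSq k d = μ d * ((d ^ 2 / (d ^ 2).gcd k : ℕ) : ℝ)⁻¹ := fun d => by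
    rw [moebiusGcdSq_apply, inv_natCast_div_gcd hk, Nat.cast_pow]
  simp_rw [card_filter_squarefree_mul_div_eq_tsum hk, hterm]
  refine tendsto_tsum_of_dominated_convergence (bound := (‖moebiusGcdSq k ·‖))
    (summable_norm_moebiusGcdSq hk) (fun d => (tendsto_natCast_div_div _).const_mul _)
    (.of_forall fun N d => ?_)
  rw [hterm, norm_mul, norm_mul]
  gcongr
  rw [Real.norm_of_nonneg (by positivity), Real.norm_of_nonneg (by positivity)]
  exact natCast_div_div_le_inv _ _

theorem tsum_moebius_div_sq : ∑' n : ℕ, (μ n : ℝ) / (n : ℝ) ^ 2 = 6 / π ^ 2 := by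
  have hL := LSeries_zeta_mul_Lseries_moebius (s := 2) (by norm_num)
  rw [LSeries_zeta_eq_riemannZeta (by norm_num), riemannZeta_two] at hL
  have hterm : ∀ n : ℕ,
      LSeries.term (fun n => (μ n : ℂ)) 2 n = (((μ n : ℝ) / (n : ℝ) ^ 2 : ℝ) : ℂ) := by
    intro n
    rcases eq_or_ne n 0 with rfl | hn
    · simp
    · rw [LSeries.term_of_ne_zero hn, show (2 : ℂ) = (2 : ℕ) by norm_num, Complex.cpow_natCast]
      push_cast
      rfl
  apply Complex.ofReal_injective
  rw [Complex.ofReal_tsum, ← tsum_congr hterm, ← LSeries]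
  have hπ : (π : ℂ) ≠ 0 := Complex.ofReal_ne_zero.2 pi_ne_zero
  push_cast
  field_simp at hL ⊢
  linear_combination hL

theorem tsum_moebiusGcdSq {k : ℕ} (hk : k ≠ 0) :
    ∑' d, moebiusGcdSq k d = 6 / π ^ 2 *
      ∏ p ∈ k.primeFactors, (1 - ((p ^ 2).gcd k : ℕ) / (p : ℝ) ^ 2) / (1 - 1 / (p : ℝ) ^ 2) := by
  have hk_euler := (isMultiplicative_moebiusGcdSq k).eulerProduct (summable_norm_moebiusGcdSq hk)
  have h1_euler := (isMultiplicative_moebiusGcdSq 1).eulerProduct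
    (summable_norm_moebiusGcdSq one_ne_zero)
  have h1 : ∑' d, moebiusGcdSq 1 d = 6 / π ^ 2 := by
    simp only [moebiusGcdSq_apply, Nat.gcd_one_right, Nat.cast_one, mul_one_div,
      tsum_moebius_div_sq]
  rw [h1] at h1_euler
  refine tendsto_nhds_unique hk_euler ((h1_euler.mul_const _).congr' ?_)
  filter_upwards [eventually_gt_atTop k] with n hn
  have hfactor : ∀ p : ℕ, p.Prime → 1 - 1 / (p : ℝ) ^ 2 ≠ 0 := fun p hp => by
    have : (1 : ℝ) < (p : ℝ) ^ 2 := one_lt_pow₀ (by exact_mod_cast hp.one_lt) two_ne_zero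
    exact (sub_pos.2 ((div_lt_one (by positivity)).2 this)).ne'
  have hsub : k.primeFactors ⊆ n.primesBelow := fun p hp =>
    Nat.mem_primesBelow.2
      ⟨(Nat.le_of_mem_primeFactors hp).trans_lt hn, Nat.prime_of_mem_primeFactors hp⟩
  rw [prod_subset hsub fun p hp hpk => ?_, ← prod_mul_distrib]
  · refine prod_congr rfl fun p hp => ?_
    have hp := (Nat.mem_primesBelow.1 hp).2
    rw [tsum_moebiusGcdSq_prime_pow k hp, tsum_moebiusGcdSq_prime_pow 1 hp, Nat.gcd_one_right,
      Nat.cast_one, mul_div_cancel₀ _ (hfactor p hp)]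
  · have hp := (Nat.mem_primesBelow.1 hp).2
    have hcop : (p ^ 2).gcd k = 1 :=
      Nat.Coprime.pow_left 2 <| (Nat.Prime.coprime_iff_not_dvd hp).2 fun h =>
        hpk (Nat.mem_primeFactors.2 ⟨hp, h, hk⟩)
    rw [hcop, Nat.cast_one, div_self (hfactor p hp)]

theorem tendsto_card_filter_not_div_card_filter {P : ℕ → Prop} [DecidablePred P] {δ : ℝ}
    (hδ : 0 < δ) (h : Tendsto (fun N : ℕ => (#{m ∈ Icc 1 N | P m} : ℝ) / N) atTop (𝓝 δ)) :
    Tendsto (fun N : ℕ => (#{m ∈ Icc 1 N | ¬P m} : ℝ) / #{m ∈ Icc 1 N | P m}) atTop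
      (𝓝 (δ⁻¹ - 1)) := by
  refine ((h.inv₀ hδ.ne').sub_const 1).congr' ?_
  filter_upwards [h.eventually (eventually_ne_nhds hδ.ne')] with N hN
  have hP : (#{m ∈ Icc 1 N | P m} : ℝ) ≠ 0 := by rintro h0; simp [h0] at hN
  have hcard : (#{m ∈ Icc 1 N | ¬P m} : ℝ) = N - #{m ∈ Icc 1 N | P m} := by
    rw [eq_sub_iff_add_eq, ← Nat.cast_add, add_comm, card_filter_add_card_filter_not,
      Nat.card_Icc, Nat.add_sub_cancel]
  rw [hcard, inv_div, sub_div, div_self hP]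

theorem ratio_nonsquarefree_to_squarefree_multiples_of_six :
    Filter.Tendsto
      (fun N : ℕ =>
        (((Finset.Icc 1 N).filter (fun m => ¬ Squarefree (6 * m))).card : ℝ)
          / (((Finset.Icc 1 N).filter (fun m => Squarefree (6 * m))).card : ℝ))
      Filter.atTop (nhds (Real.pi ^ 2 / 3 - 1)) := by
  have hprimes : Nat.primeFactors 6 = {2, 3} := by
    rw [show 6 = 2 * 3 from rfl, Nat.primeFactors_mul two_ne_zero three_ne_zero,
      Nat.prime_two.primeFactors, Nat.prime_three.primeFactors]
    rfl
  have hdensity : ∑' d, moebiusGcdSq 6 d = 3 / π ^ 2 := by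
    rw [tsum_moebiusGcdSq (by norm_num), hprimes, prod_pair (by norm_num)]
    norm_num
    ring
  have h := tendsto_card_filter_squarefree_mul_div (k := 6) (by norm_num)
  rw [hdensity] at h
  simpa [inv_div] using tendsto_card_filter_not_div_card_filter (by positivity) h
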